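/- Let G be a parity game, let B ⊆ V be an Odd-dominion in G, and let W ⊆ V ∖ B be a set such that every vertex of W has at least one successor in W (so the subgame G ∩ W induced on W is a parity game) and such that every v ∈ W ∩ V_Even satisfies post(v) ⊆ W ∪ B. If D ⊆ W is an Odd-dominion in the subgame G ∩ W, then D ∪ B is an Odd-dominion in G. -/

import Mathlib

open Classical

noncomputable section

instance (priority := 5000) (n : ℕ) : WellFoundedLT (Fin n) :=
  Finite.to_wellFoundedLT

noncomputable instance (priority := 5000) (n : ℕ) : LinearOrder (Lex (Fin n → ℕ)) :=
  inferInstance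

/-- Least element of a set, if it exists; otherwise a default value. -/
def sLeast {α : Type*} [Preorder α] (s : Set α) (dflt : α) : α :=
  if h : ∃ a, IsLeast s a then h.choose else dflt

/-- Greatest element of a set, if it exists; otherwise a default value. -/
def sGreatest {α : Type*} [Preorder α] (s : Set α) (dflt : α) : α :=
  if h : ∃ a, IsGreatest s a then h.choose else dflt

/-- A parity game: a finite set of vertices with a total edge relation, a priority
function and an ownership function (`ownerEven v = true` iff `v ∈ V_Even`). -/
structure ParityGame (V : Type*) [Fintype V] where
  E : V → V → Prop
  total : ∀ v, ∃ w, E v w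
  prio : V → ℕ
  ownerEven : V → Bool

namespace ParityGame

variable {V : Type*} [Fintype V] [DecidableEq V] (G : ParityGame V)

/-- `d` is one plus the maximal priority occurring in the game. -/
def d : ℕ := (Finset.univ.sup G.prio) + 1

/-- The domain of (extended) measures: `⊤` together with `d`-tuples of naturals,
ordered lexicographically with `⊤` maximal.  This is `M_Even_ext` (together with
tuples that are nonzero at even positions, which are never used). -/
abbrev Meas : Type _ := WithTop (Lex (Fin G.d → ℕ))

/-- `nP i` is the number of vertices of priority `i`. -/
def nP (i : ℕ) : ℕ := (Finset.univ.filter (fun v => G.prio v = i)).card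

/-- Membership in `M_Even`: `⊤`, or a `d`-tuple which is `0` at even positions and
bounded by `nP i` at odd positions `i`. -/
def inMEven (m : G.Meas) : Prop :=
  m = ⊤ ∨ ∃ f : Fin G.d → ℕ, m = ((toLex f : Lex (Fin G.d → ℕ)) : G.Meas) ∧
    ∀ i : Fin G.d, (Even (i : ℕ) → f i = 0) ∧ (¬ Even (i : ℕ) → f i ≤ G.nP (i : ℕ))

/-- Membership in `M_Even_ext`: `⊤`, or a `d`-tuple which is `0` at even positions. -/
def inMEvenExt (m : G.Meas) : Prop :=
  m = ⊤ ∨ ∃ f : Fin G.d → ℕ, m = ((toLex f : Lex (Fin G.d → ℕ)) : G.Meas) ∧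
    ∀ i : Fin G.d, Even (i : ℕ) → f i = 0

/-- Truncation of a measure to components `0, …, k` (other components set to `0`);
`⊤` is mapped to `⊤`. -/
def trunc (k : ℕ) (m : G.Meas) : G.Meas :=
  WithTop.map (fun f : Lex (Fin G.d → ℕ) => toLex (fun j : Fin G.d => if (j : ℕ) ≤ k then ofLex f j else 0)) m

/-- `a ≥_k b` : comparison of measures on components `0, …, k` only. -/
def geAt (k : ℕ) (a b : G.Meas) : Prop := G.trunc k b ≤ G.trunc k a

/-- `a >_k b` : strict comparison of measures on components `0, …, k` only. -/
def gtAt (k : ℕ) (a b : G.Meas) : Prop := G.trunc k b < G.trunc k a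

/-- The defining condition of `Prog(ρ,v,w)`. -/
def progCond (ρ : V → G.Meas) (v w : V) (m : G.Meas) : Prop :=
  if Even (G.prio v) then G.geAt (G.prio v) m (ρ w)
  else (G.gtAt (G.prio v) m (ρ w) ∨ (m = ⊤ ∧ ρ w = ⊤))

/-- `Prog(ρ,v,w)`: the least element of `M_Even` satisfying `progCond`. -/
def Prog (ρ : V → G.Meas) (v w : V) : G.Meas :=
  if h : ∃ m, IsLeast {m | G.inMEven m ∧ G.progCond ρ v w m} m then h.choose else ⊤

/-- `ρ` takes values in `M_Even`. -/
def IsMeasure (ρ : V → G.Meas) : Prop := ∀ v, G.inMEven (ρ v)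

/-- Game parity progress measure. -/
def IsGPM (ρ : V → G.Meas) : Prop :=
  G.IsMeasure ρ ∧ ∀ v,
    (G.ownerEven v = true → ∃ w, G.E v w ∧ G.geAt (G.prio v) (ρ v) (G.Prog ρ v w)) ∧
    (G.ownerEven v = false → ∀ w, G.E v w → G.geAt (G.prio v) (ρ v) (G.Prog ρ v w))

/-- A play: an infinite `E`-path. -/
def IsPlay (π : ℕ → V) : Prop := ∀ n, G.E (π n) (π (n + 1))

/-- Priority `p` occurs infinitely often on `π`. -/
def InfOft (π : ℕ → V) (p : ℕ) : Prop := ∀ N, ∃ n, N ≤ n ∧ G.prio (π n) = p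

/-- A play is won by Even iff the least priority occurring infinitely often is even. -/
def WonByEven (π : ℕ → V) : Prop := Even (sInf {p | G.InfOft π p})

/-- Won by player `i` (`true` = Even, `false` = Odd). -/
def WonBy (i : Bool) (π : ℕ → V) : Prop :=
  if i then G.WonByEven π else ¬ G.WonByEven π

/-- The history of a play before time `n`. -/
def hist (π : ℕ → V) (n : ℕ) : List V := List.ofFn (fun k : Fin n => π (k : ℕ))

/-- A (history-dependent) strategy for player `i` is valid if it always moves along edges
from vertices of player `i`. -/
def ValidStrat (i : Bool) (σ : List V → V → V) : Prop :=
  ∀ h v, G.ownerEven v = i → G.E v (σ h v)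

/-- Consistency of a play with a history-dependent strategy of player `i`. -/
def ConsH (i : Bool) (σ : List V → V → V) (π : ℕ → V) : Prop :=
  ∀ n, G.ownerEven (π n) = i → π (n + 1) = σ (hist π n) (π n)

/-- Consistency of a play with a positional strategy of player `i`. -/
def ConsP (i : Bool) (σ : V → V) (π : ℕ → V) : Prop :=
  ∀ n, G.ownerEven (π n) = i → π (n + 1) = σ (π n)

/-- Winning region of player `i`: vertices from which `i` has a winning strategy. -/
def WinRegion (i : Bool) : Set V :=
  {v | ∃ σ : List V → V → V, G.ValidStrat i σ ∧
    ∀ π, G.IsPlay π → π 0 = v → G.ConsH i σ π → G.WonBy i π}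

/-- The `i`-attractor into `U`. -/
def Attr (i : Bool) (U : Set V) : Set V :=
  ⋂₀ {A | U ⊆ A ∧
    (∀ v, G.ownerEven v = i → (∃ w, G.E v w ∧ w ∈ A) → v ∈ A) ∧
    (∀ v, G.ownerEven v ≠ i → (∀ w, G.E v w → w ∈ A) → v ∈ A)}

/-- The guarded attractor `Attr^{≥k}_{Odd,W}(U)`. -/
def GAttr (k : ℕ) (W U : Set V) : Set V :=
  ⋂₀ {A | U ⊆ A ∧ A ⊆ W ∩ {v | k ≤ G.prio v} ∧
    ∀ u ∈ W ∩ {v | k ≤ G.prio v},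
      (G.ownerEven u = false → (∃ w, G.E u w ∧ w ∈ A) → u ∈ A) ∧
      (G.ownerEven u = true → (∀ w, G.E u w → w ∈ W → w ∈ A) → u ∈ A)}

/-- The lifting operator `Lift(ρ, v)`. -/
def Lift (ρ : V → G.Meas) (v : V) : V → G.Meas :=
  Function.update ρ v
    (if G.ownerEven v = true
      then max (ρ v) (sLeast {m | ∃ w, G.E v w ∧ m = G.Prog ρ v w} ⊤)
      else max (ρ v) (sGreatest {m | ∃ w, G.E v w ∧ m = G.Prog ρ v w} ⊤))

/-- The all-zero measure. -/
def zeroMeas : G.Meas := ((toLex (fun _ : Fin G.d => 0) : Lex (Fin G.d → ℕ)) : G.Meas)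

/-- A lifting sequence `ρ₀, …, ρ_N` in which `v` is the first vertex lifted to `⊤`. -/
def FirstTop (ρs : ℕ → V → G.Meas) (N : ℕ) (v : V) : Prop :=
  (∀ u, ρs 0 u = G.zeroMeas) ∧
  (∀ j < N, ∃ u, ρs (j + 1) = G.Lift (ρs j) u ∧
    (∀ w, ρs j w ≤ ρs (j + 1) w) ∧ ρs j ≠ ρs (j + 1)) ∧
  (∀ j < N, ∀ w, ρs j w ≠ ⊤) ∧
  ρs N v = ⊤

/-- The prefix `π 0 … π l` of a play is an `i`-dominated stretch. -/
def domStretchPrefix (π : ℕ → V) (i l : ℕ) : Prop :=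
  (∀ m ≤ l, i ≤ G.prio (π m)) ∧ (∃ m ≤ l, G.prio (π m) = i)

/-- The degree of the prefix `π 0 … π l` with respect to priority `i`: the number of
its vertices of priority `i`. -/
def degree (π : ℕ → V) (i l : ℕ) : ℕ :=
  ((Finset.range (l + 1)).filter (fun m => G.prio (π m) = i)).card

/-- The value `θ(π)` of a play: `⊤` if `π` is won by Odd, and otherwise the tuple whose
component at each odd position `i` is the degree of the maximal `i`-dominated stretch
that is a prefix of `π` (and `0` if there is no such prefix). -/
def theta (π : ℕ → V) : G.Meas :=
  if G.WonByEven π then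
    ((toLex (fun j : Fin G.d =>
      if Even (j : ℕ) then 0
      else sSup {c | ∃ l, G.domStretchPrefix π (j : ℕ) l ∧ c = G.degree π (j : ℕ) l}) :
        Lex (Fin G.d → ℕ)) : G.Meas)
  else ⊤

/-- `U` is an `i`-dominion inside the subgame induced on `W`. -/
def IsDominionIn (W : Set V) (i : Bool) (U : Set V) : Prop :=
  ∃ σ : List V → V → V,
    (∀ h u, u ∈ W → G.ownerEven u = i → G.E u (σ h u) ∧ σ h u ∈ W) ∧
    ∀ π, G.IsPlay π → (∀ n, π n ∈ W) → π 0 ∈ U → G.ConsH i σ π →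
      (∀ n, π n ∈ U) ∧ G.WonBy i π

/-- `U` is an `i`-dominion in `G`. -/
def IsDominion (i : Bool) (U : Set V) : Prop := G.IsDominionIn Set.univ i U

/-- Winning region of player `i` in the subgame induced on `W`. -/
def WinIn (W : Set V) (i : Bool) : Set V :=
  {v | v ∈ W ∧ ∃ σ : List V → V → V,
    (∀ h u, u ∈ W → G.ownerEven u = i → G.E u (σ h u) ∧ σ h u ∈ W) ∧
    ∀ π, G.IsPlay π → (∀ n, π n ∈ W) → π 0 = v → G.ConsH i σ π → G.WonBy i π}

end ParityGame

open ParityGame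


/-!
Odd follows the dominion strategy of `D` in the subgame `G ∩ W` until the play first enters
`B`, and from then on the dominion strategy of `B`, restarted at the entry. Before the entry
the play stays in `W`, since Even can leave `W` only into `B`; it stays in `D` because a finite
prefix consistent with the strategy of `D` extends to a full play of the subgame, which is total.
After the entry the play stays in `B` and is won by Odd, and winning is a property of the tail.
-/

namespace ParityGame

section History

variable {α : Type*}

theorem length_hist (π : ℕ → α) (n : ℕ) : (hist π n).length = n :=
  List.length_ofFn

theorem hist_succ (π : ℕ → α) (n : ℕ) : hist π (n + 1) = hist π n ++ [π n] := by
  simp only [hist, List.ofFn_succ', List.concat_eq_append]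
  rfl

theorem mem_hist {π : ℕ → α} {n : ℕ} {x : α} : x ∈ hist π n ↔ ∃ m < n, π m = x := by
  simp [hist, List.mem_ofFn, Fin.exists_iff]

theorem hist_congr {π τ : ℕ → α} {n : ℕ} (h : ∀ m < n, π m = τ m) : hist π n = hist τ n :=
  List.ofFn_inj.mpr (funext fun m => h m m.2)

theorem hist_add (π : ℕ → α) (a n : ℕ) :
    hist π (a + n) = hist π a ++ hist (fun m => π (a + m)) n :=
  List.ofFn_add

/-- The histories of the sequence whose terms are `next` applied to the list of earlier terms. -/
def histSeq (next : List α → α) : ℕ → List α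
  | 0 => []
  | n + 1 => histSeq next n ++ [next (histSeq next n)]

theorem exists_eq_next_hist (next : List α → α) : ∃ τ : ℕ → α, ∀ n, τ n = next (hist τ n) := by
  have hhist : ∀ n, hist (fun m => next (histSeq next m)) n = histSeq next n := by
    intro n
    induction n with
    | zero => rfl
    | succ n ih => rw [hist_succ, ih]; rfl
  exact ⟨fun m => next (histSeq next m), fun n => by rw [hhist]⟩

end History

variable {V : Type*} [Fintype V] (G : ParityGame V)

theorem infOft_shift (π : ℕ → V) (a p : ℕ) :
    G.InfOft (fun m => π (a + m)) p ↔ G.InfOft π p := by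
  constructor
  · intro h N
    obtain ⟨n, hn, hp⟩ := h N
    exact ⟨a + n, by omega, hp⟩
  · intro h N
    obtain ⟨n, hn, hp⟩ := h (a + N)
    refine ⟨n - a, by omega, ?_⟩
    show G.prio (π (a + (n - a))) = p
    rwa [Nat.add_sub_cancel' (by omega)]

theorem wonBy_shift (i : Bool) (π : ℕ → V) (a : ℕ) :
    G.WonBy i (fun m => π (a + m)) ↔ G.WonBy i π := by
  simp only [WonBy, WonByEven, infOft_shift]

def ValidStratIn (W : Set V) (i : Bool) (σ : List V → V → V) : Prop :=
  ∀ h u, u ∈ W → G.ownerEven u = i → G.E u (σ h u) ∧ σ h u ∈ W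

def IsDominionStratIn (W : Set V) (i : Bool) (U : Set V) (σ : List V → V → V) : Prop :=
  G.ValidStratIn W i σ ∧
    ∀ π, G.IsPlay π → (∀ n, π n ∈ W) → π 0 ∈ U → G.ConsH i σ π →
      (∀ n, π n ∈ U) ∧ G.WonBy i π

def IsConsPrefixIn (W : Set V) (i : Bool) (σ : List V → V → V) (π : ℕ → V) (N : ℕ) : Prop :=
  (∀ m ≤ N, π m ∈ W) ∧
    ∀ m < N, G.E (π m) (π (m + 1)) ∧ (G.ownerEven (π m) = i → π (m + 1) = σ (hist π m) (π m))

variable {G}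

theorem isPlay_consH_of_forall_isConsPrefixIn {W : Set V} {i : Bool} {σ : List V → V → V}
    {π : ℕ → V} (h : ∀ N, G.IsConsPrefixIn W i σ π N) :
    G.IsPlay π ∧ (∀ n, π n ∈ W) ∧ G.ConsH i σ π :=
  ⟨fun n => ((h (n + 1)).2 n n.lt_succ_self).1, fun n => (h n).1 n le_rfl,
    fun n => ((h (n + 1)).2 n n.lt_succ_self).2⟩

theorem IsConsPrefixIn.exists_extend {W : Set V} {i : Bool} {σ : List V → V → V}
    (hσ : G.ValidStratIn W i σ)
    (hW : ∀ v ∈ W, ∃ w, G.E v w ∧ w ∈ W) {π : ℕ → V} {N : ℕ}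
    (hπ : G.IsConsPrefixIn W i σ π N) :
    ∃ τ : ℕ → V, (∀ n, G.IsConsPrefixIn W i σ τ n) ∧ ∀ m ≤ N, τ m = π m := by
  choose! f hfE hfW using hW
  let move : List V → V → V := fun h v => if G.ownerEven v = i then σ h v else f v
  have hmove : ∀ h v, v ∈ W → G.E v (move h v) ∧ move h v ∈ W := by
    intro h v hv
    by_cases ho : G.ownerEven v = i
    · simpa only [move, if_pos ho] using hσ h v hv ho
    · simpa only [move, if_neg ho] using And.intro (hfE v hv) (hfW v hv)
  obtain ⟨τ, hτ⟩ := exists_eq_next_hist fun h =>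
    if h.length ≤ N then π h.length else move h.dropLast (h.getLastD (π 0))
  have hτπ : ∀ m ≤ N, τ m = π m := fun m hm => by
    rw [hτ, if_pos (by rwa [length_hist]), length_hist]
  have hτmove : ∀ n ≥ N, τ (n + 1) = move (hist τ n) (τ n) := fun n hn => by
    have hlen : ¬(hist τ n ++ [τ n]).length ≤ N := by
      simp only [List.length_append, length_hist, List.length_singleton]
      omega
    rw [hτ, hist_succ, if_neg hlen, List.dropLast_concat, List.getLastD_concat]
  have hτW : ∀ n, τ n ∈ W := by
    intro n
    induction n with
    | zero => exact hτπ 0 (Nat.zero_le N) ▸ hπ.1 0 (Nat.zero_le N)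
    | succ n ih =>
      by_cases hn : n + 1 ≤ N
      · exact hτπ _ hn ▸ hπ.1 _ hn
      · exact hτmove n (by omega) ▸ (hmove _ _ ih).2
  refine ⟨τ, fun n => ⟨fun m _ => hτW m, fun m _ => ?_⟩, hτπ⟩
  by_cases hm : m < N
  · rw [hτπ m hm.le, hτπ (m + 1) hm, hist_congr fun k hk => hτπ k (by omega)]
    exact hπ.2 m hm
  · rw [hτmove m (by omega)]
    exact ⟨(hmove _ _ (hτW m)).1, fun ho => if_pos ho⟩

theorem IsDominionStratIn.mem_of_isConsPrefixIn {W U : Set V} {i : Bool} {σ : List V → V → V}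
    (hσ : G.IsDominionStratIn W i U σ) (hW : ∀ v ∈ W, ∃ w, G.E v w ∧ w ∈ W) {π : ℕ → V}
    {N : ℕ} (hπ : G.IsConsPrefixIn W i σ π N) (h0 : π 0 ∈ U) : ∀ m ≤ N, π m ∈ U := by
  obtain ⟨τ, hτ, hτπ⟩ := hπ.exists_extend hσ.1 hW
  obtain ⟨hτplay, hτW, hτcons⟩ := isPlay_consH_of_forall_isConsPrefixIn hτ
  intro m hm
  rw [← hτπ m hm]
  exact (hσ.2 τ hτplay hτW (hτπ 0 (Nat.zero_le N) ▸ h0) hτcons).1 m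

variable (G)

/-- Player `i` follows `σD` until the play first meets `B`, then `σB` on the history counted
from that first visit. -/
def switchStrat (B W : Set V) (σB σD : List V → V → V) (h : List V) (v : V) : V :=
  if ∃ x ∈ h ++ [v], x ∈ B then σB (h.drop (h.findIdx (· ∈ B))) v
  else if v ∈ W then σD h v else (G.total v).choose

variable {G}

section Switch

variable {B W : Set V} {σB σD : List V → V → V} {i : Bool}

theorem validStrat_switchStrat (hσB : G.ValidStrat i σB)
    (hσD : G.ValidStratIn W i σD) :
    G.ValidStrat i (G.switchStrat B W σB σD) := by
  intro h u hu
  unfold switchStrat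
  split_ifs with _ huW
  · exact hσB _ u hu
  · exact (hσD h u huW hu).1
  · exact (G.total u).choose_spec

theorem switchStrat_eq_of_not_mem {h : List V} {v : V} (hB : ∀ x ∈ h ++ [v], x ∉ B)
    (hv : v ∈ W) :
    G.switchStrat B W σB σD h v = σD h v := by
  rw [switchStrat, if_neg (by simpa only [not_exists, not_and] using hB), if_pos hv]

theorem switchStrat_hist_add {π : ℕ → V} {a : ℕ} (hpre : ∀ m < a, π m ∉ B) (ha : π a ∈ B)
    (k : ℕ) :
    G.switchStrat B W σB σD (hist π (a + k)) (π (a + k)) =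
      σB (hist (fun m => π (a + m)) k) (π (a + k)) := by
  have hfind : (hist π (a + k)).findIdx (· ∈ B) = a := by
    have hpre' : (hist π a).findIdx (· ∈ B) = a := by
      rw [List.findIdx_eq_length_of_false fun x hx => ?_, length_hist]
      obtain ⟨m, hm, rfl⟩ := mem_hist.mp hx
      simpa using hpre m hm
    have hsuf : (hist (fun m => π (a + m)) k).findIdx (· ∈ B) = 0 := by
      cases k with
      | zero => rfl
      | succ k => simp [hist, List.ofFn_succ, List.findIdx_cons, ha]
    rw [hist_add, List.findIdx_append, hpre', length_hist, if_neg (lt_irrefl a), hsuf, zero_add]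
  have hvisit : ∃ x ∈ hist π (a + k) ++ [π (a + k)], x ∈ B :=
    ⟨π a, by rw [← hist_succ, mem_hist]; exact ⟨a, by omega, rfl⟩, ha⟩
  rw [switchStrat, if_pos hvisit, hfind, hist_add, List.drop_left' (length_hist π a)]

theorem isConsPrefixIn_of_switchStrat
    (hσD : G.ValidStratIn W i σD)
    (hWopp : ∀ v ∈ W, G.ownerEven v = !i → ∀ w, G.E v w → w ∈ W ∪ B) {π : ℕ → V} {N : ℕ}
    (hπ : G.IsPlay π) (hcons : G.ConsH i (G.switchStrat B W σB σD) π) (h0 : π 0 ∈ W)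
    (hB : ∀ m ≤ N, π m ∉ B) : G.IsConsPrefixIn W i σD π N := by
  have hstep : ∀ m < N, π m ∈ W →
      (G.ownerEven (π m) = i → π (m + 1) = σD (hist π m) (π m)) ∧ π (m + 1) ∈ W := by
    intro m hm hmW
    have hfollow : G.ownerEven (π m) = i → π (m + 1) = σD (hist π m) (π m) := fun ho => by
      refine (hcons m ho).trans (switchStrat_eq_of_not_mem (fun x hx => ?_) hmW)
      obtain ⟨k, hk, rfl⟩ := mem_hist.mp (hist_succ π m ▸ hx)
      exact hB k (by omega)
    refine ⟨hfollow, ?_⟩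
    by_cases ho : G.ownerEven (π m) = i
    · exact hfollow ho ▸ (hσD _ _ hmW ho).2
    · exact (hWopp _ hmW (Bool.eq_not.mpr ho) _ (hπ m)).resolve_right (hB _ hm)
  have hW : ∀ m ≤ N, π m ∈ W := by
    intro m
    induction m with
    | zero => exact fun _ => h0
    | succ m ih => exact fun hm => (hstep m hm (ih (by omega))).2
  exact ⟨hW, fun m hm => ⟨hπ m, (hstep m hm (hW m hm.le)).1⟩⟩

theorem consH_shift_of_switchStrat {π : ℕ → V} {a : ℕ}
    (hcons : G.ConsH i (G.switchStrat B W σB σD) π) (hpre : ∀ m < a, π m ∉ B) (ha : π a ∈ B) :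
    G.ConsH i σB (fun m => π (a + m)) := fun k ho => by
  show π (a + k + 1) = _
  rw [hcons (a + k) ho, switchStrat_hist_add hpre ha]

end Switch

end ParityGame

open ParityGame

theorem subgame_dominion_union_dominion_general
    {V : Type*} [Fintype V] (G : ParityGame V) (B W D : Set V)
    (hB : G.IsDominion false B)
    (hWtot : ∀ v ∈ W, ∃ w, G.E v w ∧ w ∈ W)
    (hWeven : ∀ v ∈ W, G.ownerEven v = true → ∀ w, G.E v w → w ∈ W ∪ B)
    (hDW : D ⊆ W)
    (hDdom : G.IsDominionIn W false D) :
    G.IsDominion false (D ∪ B) := by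
  obtain ⟨σB, hσB⟩ := hB
  obtain ⟨σD, hσD⟩ : ∃ σD, G.IsDominionStratIn W false D σD := hDdom
  have hvalid : G.ValidStrat false (G.switchStrat B W σB σD) :=
    validStrat_switchStrat (fun h u hu => (hσB.1 h u trivial hu).1) hσD.1
  refine ⟨_, fun h u _ hu => ⟨hvalid h u hu, trivial⟩, fun π hπ _ h0 hcons => ?_⟩
  have hprefix : ∀ N, (∀ m ≤ N, π m ∉ B) → G.IsConsPrefixIn W false σD π N := fun N hN =>
    isConsPrefixIn_of_switchStrat hσD.1 hWeven hπ hcons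
      (hDW (h0.resolve_right (hN 0 (Nat.zero_le N)))) hN
  by_cases hvisit : ∃ n, π n ∈ B
  · set a := Nat.find hvisit
    have hpre : ∀ m < a, π m ∉ B := fun m => Nat.find_min hvisit
    have hpreD : ∀ m < a, π m ∈ D := fun m hm =>
      hσD.mem_of_isConsPrefixIn hWtot (hprefix m fun k hk => hpre k (by omega))
        (h0.resolve_right (hpre 0 (by omega))) m le_rfl
    obtain ⟨htailB, hwin⟩ := hσB.2 (fun m => π (a + m)) (fun n => hπ (a + n)) (fun _ => trivial)
      (Nat.find_spec hvisit) (consH_shift_of_switchStrat hcons hpre (Nat.find_spec hvisit))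
    refine ⟨fun n => ?_, (G.wonBy_shift false π a).1 hwin⟩
    by_cases hn : n < a
    · exact Or.inl (hpreD n hn)
    · exact Or.inr (Nat.add_sub_cancel' (not_lt.mp hn) ▸ htailB (n - a))
  · push Not at hvisit
    obtain ⟨hplay, hW, hconsD⟩ :=
      isPlay_consH_of_forall_isConsPrefixIn fun N => hprefix N fun m _ => hvisit m
    obtain ⟨hD, hwin⟩ := hσD.2 π hplay hW (h0.resolve_right (hvisit 0)) hconsD
    exact ⟨fun n => Or.inl (hD n), hwin⟩

/-- if `B` is an Odd-dominion, `W ⊆ V ∖ B` induces a subgame such that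
Even can only leave `W` into `B`, and `D ⊆ W` is an Odd-dominion of the subgame
`G ∩ W`, then `D ∪ B` is an Odd-dominion of `G`. -/
theorem subgame_dominion_union_dominion
    {V : Type*} [Fintype V] [DecidableEq V] (G : ParityGame V) (B W D : Set V)
    (hB : G.IsDominion false B)
    (hWB : W ⊆ Set.univ \ B)
    (hWtot : ∀ v ∈ W, ∃ w, G.E v w ∧ w ∈ W)
    (hWeven : ∀ v ∈ W, G.ownerEven v = true → ∀ w, G.E v w → w ∈ W ∪ B)
    (hDW : D ⊆ W)
    (hDdom : G.IsDominionIn W false D) :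
    G.IsDominion false (D ∪ B) :=
  subgame_dominion_union_dominion_general G B W D hB hWtot hWeven hDW hDdom

end
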